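/- arXiv:2512.22691 — 2 statements merged into one kernel-verified Lean document; each statement's English description precedes it below -/
import Mathlib

section
/- Let f(y) = Σᵢ wᵢ φ(y - xᵢ) be a finite Gaussian mixture with weights wᵢ > 0 and standard normal density φ. If y₀ is a global maximum of f, then there exists an index k with |y₀ - xₖ| ≤ 1. -/
/-!
If every centre `xᵢ` were at distance more than `1` from `y₀`, every term of
`f''(y₀) = ∑ wᵢ ((y₀ - xᵢ)² - 1) φ(y₀ - xᵢ)` would be positive. But the second derivative of a
function at a maximum cannot be positive.
-/

open Real Finset

noncomputable def stdNormalPdf (t : ℝ) : ℝ := (Real.sqrt (2 * π))⁻¹ * Real.exp (-t ^ 2 / 2)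

open Filter Topology

/-- By the second-derivative test a point with positive second derivative is a local minimum,
so an interior maximum there would make `f` locally constant. -/
theorem IsLocalMax.deriv_deriv_nonpos {f : ℝ → ℝ} {a : ℝ} (hmax : IsLocalMax f a)
    (hc : ContinuousAt f a) : deriv (deriv f) a ≤ 0 := by
  by_contra! hpos
  have hmin : IsLocalMin f a := isLocalMin_of_deriv_deriv_pos hpos hmax.deriv_eq_zero hc
  have hconst : f =ᶠ[𝓝 a] fun _ => f a := by
    filter_upwards [hmin, hmax] with y h₁ h₂ using le_antisymm h₂ h₁
  have hderiv : deriv f =ᶠ[𝓝 a] fun _ => 0 := by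
    filter_upwards [hconst.eventuallyEq_nhds] with y hy
    rw [hy.deriv_eq, deriv_const]
  rw [hderiv.deriv_eq, deriv_const] at hpos
  exact lt_irrefl _ hpos

theorem stdNormalPdf_pos (t : ℝ) : 0 < stdNormalPdf t := by
  have := pi_pos
  unfold stdNormalPdf
  positivity

theorem hasDerivAt_stdNormalPdf (t : ℝ) :
    HasDerivAt stdNormalPdf (-t * stdNormalPdf t) t := by
  have hexp : HasDerivAt (fun s : ℝ => -s ^ 2 / 2) (-t) t :=
    ((hasDerivAt_pow 2 t).neg.div_const 2).congr_deriv (by ring)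
  exact (hexp.exp.const_mul (Real.sqrt (2 * π))⁻¹).congr_deriv (by rw [stdNormalPdf]; ring)

theorem hasDerivAt_neg_mul_stdNormalPdf (t : ℝ) :
    HasDerivAt (fun s => -s * stdNormalPdf s) ((t ^ 2 - 1) * stdNormalPdf t) t :=
  ((hasDerivAt_neg t).mul (hasDerivAt_stdNormalPdf t)).congr_deriv (by ring)

theorem hasDerivAt_sum_mul_comp_sub {ι : Type*} (s : Finset ι) (w x : ι → ℝ) {g g' : ℝ → ℝ}
    (hg : ∀ t, HasDerivAt g (g' t) t) (y : ℝ) :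
    HasDerivAt (fun y => ∑ i ∈ s, w i * g (y - x i)) (∑ i ∈ s, w i * g' (y - x i)) y :=
  HasDerivAt.fun_sum fun i _ => ((hg (y - x i)).comp_sub_const y (x i)).const_mul (w i)

theorem deriv_deriv_sum_mul_stdNormalPdf {ι : Type*} (s : Finset ι) (w x : ι → ℝ) (y : ℝ) :
    deriv (deriv fun y => ∑ i ∈ s, w i * stdNormalPdf (y - x i)) y
      = ∑ i ∈ s, w i * (((y - x i) ^ 2 - 1) * stdNormalPdf (y - x i)) := by
  have hderiv : (deriv fun y => ∑ i ∈ s, w i * stdNormalPdf (y - x i))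
      = fun y => ∑ i ∈ s, w i * (-(y - x i) * stdNormalPdf (y - x i)) :=
    funext fun y => (hasDerivAt_sum_mul_comp_sub s w x hasDerivAt_stdNormalPdf y).deriv
  rw [hderiv]
  exact (hasDerivAt_sum_mul_comp_sub s w x hasDerivAt_neg_mul_stdNormalPdf y).deriv

theorem stmt_1 (n : ℕ) (hn : 1 ≤ n) (w x : Fin n → ℝ) (hw : ∀ i, 0 < w i)
    (f : ℝ → ℝ) (hf : ∀ y, f y = ∑ i, w i * stdNormalPdf (y - x i))
    (y₀ : ℝ) (hmax : ∀ y, f y ≤ f y₀) :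
    ∃ k : Fin n, |y₀ - x k| ≤ 1 := by
  by_contra! hfar
  obtain rfl : f = fun y => ∑ i, w i * stdNormalPdf (y - x i) := funext hf
  have : Nonempty (Fin n) := ⟨⟨0, hn⟩⟩
  have hpos : 0 < deriv (deriv fun y => ∑ i, w i * stdNormalPdf (y - x i)) y₀ := by
    rw [deriv_deriv_sum_mul_stdNormalPdf]
    refine sum_pos (fun i _ => mul_pos (hw i) (mul_pos ?_ (stdNormalPdf_pos _))) univ_nonempty
    exact sub_pos.2 ((one_lt_sq_iff_one_lt_abs _).2 (hfar i))
  have hc := (hasDerivAt_sum_mul_comp_sub univ w x hasDerivAt_stdNormalPdf y₀).continuousAt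
  exact (IsLocalMax.deriv_deriv_nonpos (Eventually.of_forall hmax) hc).not_gt hpos
end

section
/- For all A > 0: log(1 + √2·A/√(πe)) - (1/2)·log(1 + 2A²/(πe)) ≤ 1/(√(2/(πe))·A). Equivalently, the gap between the McKellips capacity upper bound and the EPI lower bound for the amplitude-constrained AWGN channel is at most √(πe/2)/A. -/
open Real

lemma key_ineq (a : ℝ) (ha : 0 < a) :
    Real.log (1 + a) - (1 / 2) * Real.log (1 + a ^ 2) ≤ 1 / a := by
  have hs : Real.sqrt (1 + a ^ 2) ≥ a := by
    nlinarith [Real.sq_sqrt (show (0:ℝ) ≤ 1 + a ^ 2 by positivity),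
      Real.sqrt_nonneg (1 + a ^ 2)]
  have hspos : (0:ℝ) < Real.sqrt (1 + a ^ 2) :=
    Real.sqrt_pos.mpr (by positivity)
  have h1 : Real.log (1 + a) ≤ Real.log ((1 + 1/a) * Real.sqrt (1 + a ^ 2)) := by
    apply Real.log_le_log (by linarith)
    have h2 : (1 + 1/a) * Real.sqrt (1 + a ^ 2)
        = Real.sqrt (1 + a ^ 2) + Real.sqrt (1 + a ^ 2) / a := by ring
    have h3 : Real.sqrt (1 + a ^ 2) / a ≥ 1 := by
      rw [ge_iff_le, le_div_iff₀ ha]; simpa using hs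
    linarith
  have h4 : Real.log ((1 + 1/a) * Real.sqrt (1 + a ^ 2))
      = Real.log (1 + 1/a) + (1/2) * Real.log (1 + a ^ 2) := by
    rw [Real.log_mul (by positivity) (by positivity), Real.log_sqrt (by positivity)]
    ring
  have h5 : Real.log (1 + 1/a) ≤ 1/a := by
    have := Real.log_le_sub_one_of_pos (show (0:ℝ) < 1 + 1/a by positivity)
    linarith
  rw [h4] at h1
  linarith

theorem stmt_13 (A : ℝ) (hA : 0 < A) :
    Real.log (1 + Real.sqrt 2 * A / Real.sqrt (π * Real.exp 1)) -
        (1 / 2) * Real.log (1 + 2 * A ^ 2 / (π * Real.exp 1)) ≤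
      1 / (Real.sqrt (2 / (π * Real.exp 1)) * A) := by
  have hpe : (0:ℝ) < π * Real.exp 1 := by positivity
  set a : ℝ := Real.sqrt 2 * A / Real.sqrt (π * Real.exp 1) with ha_def
  have ha : 0 < a := by positivity
  have hsq : a ^ 2 = 2 * A ^ 2 / (π * Real.exp 1) := by
    rw [ha_def, div_pow, mul_pow, Real.sq_sqrt (by norm_num : (0:ℝ) ≤ 2),
      Real.sq_sqrt hpe.le]
  have hr : Real.sqrt (2 / (π * Real.exp 1)) * A = a := by
    rw [ha_def, Real.sqrt_div (by norm_num : (0:ℝ) ≤ 2)]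
    ring
  rw [← hsq, hr]
  exact key_ineq a ha
end
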